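/- For every integer k ≥ 1, the element σ_2⁻¹ (σ_1 σ_2 σ_2 σ_1 σ_2⁻¹)^{2k} σ_1 of the braid group B_3 is quasipositive with exactly 6k factors; that is, it can be written as a product of 6k conjugates of the Artin generators: there exist w_1, …, w_{6k} ∈ B_3 and indices j_1, …, j_{6k} ∈ {1,2} such that σ_2⁻¹ (σ_1 σ_2 σ_2 σ_1 σ_2⁻¹)^{2k} σ_1 = ∏_{i=1}^{6k} w_i σ_{j_i} w_i⁻¹. -/
import Mathlib


/-- The defining relation of the braid group on 3 strands:
`σ₁ σ₂ σ₁ = σ₂ σ₁ σ₂`, with the two Artin generators indexed by `Fin 2`. -/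
def braid3Rels : Set (FreeGroup (Fin 2)) :=
  {FreeGroup.of 0 * FreeGroup.of 1 * FreeGroup.of 0 *
    (FreeGroup.of 1 * FreeGroup.of 0 * FreeGroup.of 1)⁻¹}

/-- The braid group on 3 strands. -/
abbrev B3 : Type := PresentedGroup braid3Rels

/-- The Artin generators of `B3`. -/
def braidGen3 (i : Fin 2) : B3 := PresentedGroup.of i

lemma braid_rel :
    braidGen3 0 * braidGen3 1 * braidGen3 0 = braidGen3 1 * braidGen3 0 * braidGen3 1 := by
  have h : ((QuotientGroup.mk (FreeGroup.of 0 * FreeGroup.of 1 * FreeGroup.of 0 *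
      (FreeGroup.of 1 * FreeGroup.of 0 * FreeGroup.of 1)⁻¹ : FreeGroup (Fin 2))) : B3) = 1 := by
    rw [QuotientGroup.eq_one_iff]
    exact Subgroup.subset_normalClosure (Set.mem_singleton _)
  simp only [QuotientGroup.mk_mul, QuotientGroup.mk_inv] at h
  exact mul_inv_eq_one.mp h

/-- conjugation form of the braid relation -/
lemma braid_conj :
    braidGen3 1 * braidGen3 0 * (braidGen3 1)⁻¹ = (braidGen3 0)⁻¹ * braidGen3 1 * braidGen3 0 := by
  set a := braidGen3 0
  set b := braidGen3 1
  calc b * a * b⁻¹ = a⁻¹ * (a * b * a) * b⁻¹ := by group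
    _ = a⁻¹ * (b * a * b) * b⁻¹ := by rw [braid_rel]
    _ = a⁻¹ * b * a := by group

/-- glue lemma: a list of conjugates of generators gives the required form. -/
lemma glue (n : ℕ) (D : B3) (L : List (B3 × Fin 2)) (hlen : L.length = n)
    (hprod : D = (L.map (fun p => p.1 * braidGen3 p.2 * p.1⁻¹)).prod) :
    ∃ (w : Fin n → B3) (j : Fin n → Fin 2),
      D = (List.ofFn (fun i : Fin n => w i * braidGen3 (j i) * (w i)⁻¹)).prod := by
  subst hlen
  refine ⟨fun i => (L.get i).1, fun i => (L.get i).2, ?_⟩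
  rw [hprod]
  congr 1
  conv_lhs => rw [← List.ofFn_get L]
  rw [List.map_ofFn]
  rfl

/-- For every `k ≥ 1`, the element `σ₂⁻¹ (σ₁ σ₂ σ₂ σ₁ σ₂⁻¹)^(2k) σ₁` of `B3` is
quasipositive with exactly `6k` factors: it is a product of `6k` conjugates of
the Artin generators. -/
theorem DK_quasipositive (k : ℕ) (hk : 1 ≤ k) :
    ∃ (w : Fin (6 * k) → B3) (j : Fin (6 * k) → Fin 2),
      (braidGen3 1)⁻¹ *
          (braidGen3 0 * braidGen3 1 * braidGen3 1 * braidGen3 0 *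
            (braidGen3 1)⁻¹) ^ (2 * k) * braidGen3 0 =
        (List.ofFn (fun i : Fin (6 * k) => w i * braidGen3 (j i) * (w i)⁻¹)).prod := by
  set a := braidGen3 0 with ha
  set b := braidGen3 1 with hb
  set X : B3 := a * b * b * a * b⁻¹ with hX
  set block : List (B3 × Fin 2) := [(b⁻¹, 0), (1, 1), (1, 0)] with hblock
  set tail : List (B3 × Fin 2) := [(b⁻¹, 0), (a⁻¹, 1), (1, 0)] with htail
  apply glue (6 * k) _ ((List.replicate (2 * k - 1) block).flatten ++ tail)
  · simp [hblock, htail, List.length_flatten]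
    omega
  · obtain ⟨m, hm⟩ : ∃ m, 2 * k = m + 1 := ⟨2 * k - 1, by omega⟩
    have hm2 : 2 * k - 1 = m := by omega
    have hblockprod :
        (block.map (fun p => p.1 * braidGen3 p.2 * p.1⁻¹)).prod = b⁻¹ * X * b := by
      simp only [hblock, List.map_cons, List.map_nil, List.prod_cons, List.prod_nil, hX,
        ← ha, ← hb]
      group
    have htailprod :
        (tail.map (fun p => p.1 * braidGen3 p.2 * p.1⁻¹)).prod = b⁻¹ * X * a := by
      simp only [htail, List.map_cons, List.map_nil, List.prod_cons, List.prod_nil, ← ha, ← hb,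
        inv_inv, one_mul, mul_one]
      rw [braid_conj.symm, ← ha, ← hb, hX]
      group
    rw [List.map_append, List.map_flatten, List.map_replicate, List.prod_append,
      List.prod_flatten, List.map_replicate, List.prod_replicate, hblockprod, htailprod]
    have hc : b⁻¹ * X * b = b⁻¹ * X * b⁻¹⁻¹ := by rw [inv_inv]
    rw [hc, conj_pow, hm2, hm, pow_succ]
    group
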